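/- arXiv:1902.05886 — 2 statements merged into one kernel-verified Lean document; each statement's English description precedes it below -/
import Mathlib

section
/- Let W(a,b,c,d,e,f,g) = ab - e^2/2 + cd + c^2/2 - f^2 and B(a,b,c,d,e,f,g) = -a - (3/4)d^2 + 2g - d - cd - ab - f^2 - e^2/2 - (3/2)c^2 + 2bc - 2af + 3ac + 2ad + 2cf - ec - ed + be + ae - bf + fd + (3/2)bd - a^2 - (3/4)b^2 - 2gc + (1/2)gd - (1/2)gb + ag + gf - (7/4)g^2. Then on the constraint set W = B (with all parameters real), W attains the value 7/48 at (a,b,c,d,e,f,g) = (1/4, 1/3, 1/4, 1/6, 1/12, 1/12, 1/2), and this point is a critical point of W restricted to {W = B} (the gradient of W is proportional to the gradient of W - B there). -/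
noncomputable def Wpent (a b c d e f g : ℝ) : ℝ :=
  a * b - e ^ 2 / 2 + c * d + c ^ 2 / 2 - f ^ 2

noncomputable def Bpent (a b c d e f g : ℝ) : ℝ :=
  -a - (3/4) * d ^ 2 + 2 * g - d - c * d - a * b - f ^ 2 - e ^ 2 / 2
    - (3/2) * c ^ 2 + 2 * b * c - 2 * a * f + 3 * a * c + 2 * a * d + 2 * c * f
    - e * c - e * d + b * e + a * e - b * f + f * d + (3/2) * b * d
    - a ^ 2 - (3/4) * b ^ 2 - 2 * g * c + (1/2) * g * d - (1/2) * g * b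
    + a * g + g * f - (7/4) * g ^ 2

lemma dq (p q r x : ℝ) : deriv (fun y => p*y^2 + q*y + r) x = 2*p*x + q := by
  have h1 : HasDerivAt (fun y : ℝ => y^2) (2*x) x := by simpa using hasDerivAt_pow 2 x
  have h : HasDerivAt (fun y : ℝ => p*y^2 + q*y + r) (2*p*x+q) x := by
    have := ((h1.const_mul p).add ((hasDerivAt_id x).const_mul q)).add_const r
    refine this.congr_deriv ?_
    ring
  exact h.deriv

theorem jubin_critical_point :
    Wpent (1/4) (1/3) (1/4) (1/6) (1/12) (1/12) (1/2) = 7 / 48 ∧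
    Wpent (1/4) (1/3) (1/4) (1/6) (1/12) (1/12) (1/2)
      = Bpent (1/4) (1/3) (1/4) (1/6) (1/12) (1/12) (1/2) ∧
    ∃ lam : ℝ,
      deriv (fun x => Wpent x (1/3) (1/4) (1/6) (1/12) (1/12) (1/2)) (1/4)
        = lam * deriv (fun x => Wpent x (1/3) (1/4) (1/6) (1/12) (1/12) (1/2)
            - Bpent x (1/3) (1/4) (1/6) (1/12) (1/12) (1/2)) (1/4) ∧
      deriv (fun x => Wpent (1/4) x (1/4) (1/6) (1/12) (1/12) (1/2)) (1/3)
        = lam * deriv (fun x => Wpent (1/4) x (1/4) (1/6) (1/12) (1/12) (1/2)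
            - Bpent (1/4) x (1/4) (1/6) (1/12) (1/12) (1/2)) (1/3) ∧
      deriv (fun x => Wpent (1/4) (1/3) x (1/6) (1/12) (1/12) (1/2)) (1/4)
        = lam * deriv (fun x => Wpent (1/4) (1/3) x (1/6) (1/12) (1/12) (1/2)
            - Bpent (1/4) (1/3) x (1/6) (1/12) (1/12) (1/2)) (1/4) ∧
      deriv (fun x => Wpent (1/4) (1/3) (1/4) x (1/12) (1/12) (1/2)) (1/6)
        = lam * deriv (fun x => Wpent (1/4) (1/3) (1/4) x (1/12) (1/12) (1/2)
            - Bpent (1/4) (1/3) (1/4) x (1/12) (1/12) (1/2)) (1/6) ∧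
      deriv (fun x => Wpent (1/4) (1/3) (1/4) (1/6) x (1/12) (1/2)) (1/12)
        = lam * deriv (fun x => Wpent (1/4) (1/3) (1/4) (1/6) x (1/12) (1/2)
            - Bpent (1/4) (1/3) (1/4) (1/6) x (1/12) (1/2)) (1/12) ∧
      deriv (fun x => Wpent (1/4) (1/3) (1/4) (1/6) (1/12) x (1/2)) (1/12)
        = lam * deriv (fun x => Wpent (1/4) (1/3) (1/4) (1/6) (1/12) x (1/2)
            - Bpent (1/4) (1/3) (1/4) (1/6) (1/12) x (1/2)) (1/12) ∧
      deriv (fun x => Wpent (1/4) (1/3) (1/4) (1/6) (1/12) (1/12) x) (1/2)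
        = lam * deriv (fun x => Wpent (1/4) (1/3) (1/4) (1/6) (1/12) (1/12) x
            - Bpent (1/4) (1/3) (1/4) (1/6) (1/12) (1/12) x) (1/2) := by
  have hW0 : deriv (fun x => Wpent x (1/3) (1/4) (1/6) (1/12) (1/12) (1/2)) (1/4) = (1/3) := by
    have he : (fun x => Wpent x (1/3) (1/4) (1/6) (1/12) (1/12) (1/2)) = (fun y : ℝ => (0)*y^2 + (1/3)*y + (1/16)) := by
      funext y; simp only [Wpent]; ring
    rw [he, dq]; norm_num
  have hD0 : deriv (fun x => Wpent x (1/3) (1/4) (1/6) (1/12) (1/12) (1/2) - Bpent x (1/3) (1/4) (1/6) (1/12) (1/12) (1/2)) (1/4) = (2/3) := by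
    have he : (fun x => Wpent x (1/3) (1/4) (1/6) (1/12) (1/12) (1/2) - Bpent x (1/3) (1/4) (1/6) (1/12) (1/12) (1/2)) = (fun y : ℝ => (1)*y^2 + (1/6)*y + (-5/48)) := by
      funext y; simp only [Wpent, Bpent]; ring
    rw [he, dq]; norm_num
  have hW1 : deriv (fun x => Wpent (1/4) x (1/4) (1/6) (1/12) (1/12) (1/2)) (1/3) = (1/4) := by
    have he : (fun x => Wpent (1/4) x (1/4) (1/6) (1/12) (1/12) (1/2)) = (fun y : ℝ => (0)*y^2 + (1/4)*y + (1/16)) := by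
      funext y; simp only [Wpent]; ring
    rw [he, dq]; norm_num
  have hD1 : deriv (fun x => Wpent (1/4) x (1/4) (1/6) (1/12) (1/12) (1/2) - Bpent (1/4) x (1/4) (1/6) (1/12) (1/12) (1/2)) (1/3) = (1/2) := by
    have he : (fun x => Wpent (1/4) x (1/4) (1/6) (1/12) (1/12) (1/2) - Bpent (1/4) x (1/4) (1/6) (1/12) (1/12) (1/2)) = (fun y : ℝ => (3/4)*y^2 + (0)*y + (-1/12)) := by
      funext y; simp only [Wpent, Bpent]; ring
    rw [he, dq]; norm_num
  have hW2 : deriv (fun x => Wpent (1/4) (1/3) x (1/6) (1/12) (1/12) (1/2)) (1/4) = (5/12) := by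
    have he : (fun x => Wpent (1/4) (1/3) x (1/6) (1/12) (1/12) (1/2)) = (fun y : ℝ => (1/2)*y^2 + (1/6)*y + (7/96)) := by
      funext y; simp only [Wpent]; ring
    rw [he, dq]; norm_num
  have hD2 : deriv (fun x => Wpent (1/4) (1/3) x (1/6) (1/12) (1/12) (1/2) - Bpent (1/4) (1/3) x (1/6) (1/12) (1/12) (1/2)) (1/4) = (5/6) := by
    have he : (fun x => Wpent (1/4) (1/3) x (1/6) (1/12) (1/12) (1/2) - Bpent (1/4) (1/3) x (1/6) (1/12) (1/12) (1/2)) = (fun y : ℝ => (2)*y^2 + (-1/6)*y + (-1/12)) := by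
      funext y; simp only [Wpent, Bpent]; ring
    rw [he, dq]; norm_num
  have hW3 : deriv (fun x => Wpent (1/4) (1/3) (1/4) x (1/12) (1/12) (1/2)) (1/6) = (1/4) := by
    have he : (fun x => Wpent (1/4) (1/3) (1/4) x (1/12) (1/12) (1/2)) = (fun y : ℝ => (0)*y^2 + (1/4)*y + (5/48)) := by
      funext y; simp only [Wpent]; ring
    rw [he, dq]; norm_num
  have hD3 : deriv (fun x => Wpent (1/4) (1/3) (1/4) x (1/12) (1/12) (1/2) - Bpent (1/4) (1/3) (1/4) x (1/12) (1/12) (1/2)) (1/6) = (1/2) := by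
    have he : (fun x => Wpent (1/4) (1/3) (1/4) x (1/12) (1/12) (1/2) - Bpent (1/4) (1/3) (1/4) x (1/12) (1/12) (1/2)) = (fun y : ℝ => (3/4)*y^2 + (1/4)*y + (-1/16)) := by
      funext y; simp only [Wpent, Bpent]; ring
    rw [he, dq]; norm_num
  have hW4 : deriv (fun x => Wpent (1/4) (1/3) (1/4) (1/6) x (1/12) (1/2)) (1/12) = (-1/12) := by
    have he : (fun x => Wpent (1/4) (1/3) (1/4) (1/6) x (1/12) (1/2)) = (fun y : ℝ => (-1/2)*y^2 + (0)*y + (43/288)) := by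
      funext y; simp only [Wpent]; ring
    rw [he, dq]; norm_num
  have hD4 : deriv (fun x => Wpent (1/4) (1/3) (1/4) (1/6) x (1/12) (1/2) - Bpent (1/4) (1/3) (1/4) (1/6) x (1/12) (1/2)) (1/12) = (-1/6) := by
    have he : (fun x => Wpent (1/4) (1/3) (1/4) (1/6) x (1/12) (1/2) - Bpent (1/4) (1/3) (1/4) (1/6) x (1/12) (1/2)) = (fun y : ℝ => (0)*y^2 + (-1/6)*y + (1/72)) := by
      funext y; simp only [Wpent, Bpent]; ring
    rw [he, dq]; norm_num
  have hW5 : deriv (fun x => Wpent (1/4) (1/3) (1/4) (1/6) (1/12) x (1/2)) (1/12) = (-1/6) := by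
    have he : (fun x => Wpent (1/4) (1/3) (1/4) (1/6) (1/12) x (1/2)) = (fun y : ℝ => (-1)*y^2 + (0)*y + (11/72)) := by
      funext y; simp only [Wpent]; ring
    rw [he, dq]; norm_num
  have hD5 : deriv (fun x => Wpent (1/4) (1/3) (1/4) (1/6) (1/12) x (1/2) - Bpent (1/4) (1/3) (1/4) (1/6) (1/12) x (1/2)) (1/12) = (-1/3) := by
    have he : (fun x => Wpent (1/4) (1/3) (1/4) (1/6) (1/12) x (1/2) - Bpent (1/4) (1/3) (1/4) (1/6) (1/12) x (1/2)) = (fun y : ℝ => (0)*y^2 + (-1/3)*y + (1/36)) := by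
      funext y; simp only [Wpent, Bpent]; ring
    rw [he, dq]; norm_num
  have hW6 : deriv (fun x => Wpent (1/4) (1/3) (1/4) (1/6) (1/12) (1/12) x) (1/2) = (0) := by
    have he : (fun x => Wpent (1/4) (1/3) (1/4) (1/6) (1/12) (1/12) x) = (fun y : ℝ => (0)*y^2 + (0)*y + (7/48)) := by
      funext y; simp only [Wpent]; ring
    rw [he, dq]; norm_num
  have hD6 : deriv (fun x => Wpent (1/4) (1/3) (1/4) (1/6) (1/12) (1/12) x - Bpent (1/4) (1/3) (1/4) (1/6) (1/12) (1/12) x) (1/2) = (0) := by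
    have he : (fun x => Wpent (1/4) (1/3) (1/4) (1/6) (1/12) (1/12) x - Bpent (1/4) (1/3) (1/4) (1/6) (1/12) (1/12) x) = (fun y : ℝ => (7/4)*y^2 + (-7/4)*y + (7/16)) := by
      funext y; simp only [Wpent, Bpent]; ring
    rw [he, dq]; norm_num
  refine ⟨by norm_num [Wpent], by norm_num [Wpent, Bpent], 1/2, ?_, ?_, ?_, ?_, ?_, ?_, ?_⟩ <;>
    simp only [hW0,hD0,hW1,hD1,hW2,hD2,hW3,hD3,hW4,hD4,hW5,hD5,hW6,hD6] <;> norm_num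
end

section
/- For all (a,s) with 0 ≤ a ≤ 1/2, a ≤ s ≤ 1-a, and s ≥ 1-2a, if a^2 = 2(s-a)(1-s-a) + (1/2)(s-a)^2 + (1/2)(1-s-a)^2, then a^2 ≤ 3/4 - (3/8)√3, with equality iff a = (3-√3)/4 and s = 1/2. -/
set_option maxHeartbeats 1600000 in
theorem two_triangles_case_max (a s : ℝ)
    (ha0 : 0 ≤ a) (ha : a ≤ 1/2) (has : a ≤ s) (hs1 : s ≤ 1 - a)
    (hs2 : s ≥ 1 - 2 * a)
    (heq : a ^ 2 = 2 * (s - a) * (1 - s - a) + (1/2) * (s - a) ^ 2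
      + (1/2) * (1 - s - a) ^ 2) :
    a ^ 2 ≤ 3 / 4 - (3/8) * Real.sqrt 3 ∧
    (a ^ 2 = 3 / 4 - (3/8) * Real.sqrt 3 ↔
      a = (3 - Real.sqrt 3) / 4 ∧ s = 1 / 2) := by
  set r := Real.sqrt 3 with hrdef
  have hr : r ^ 2 = 3 := Real.sq_sqrt (by norm_num)
  have hr0 : 0 ≤ r := Real.sqrt_nonneg 3
  have hr1 : 1 ≤ r := by nlinarith
  have hr2 : r ≤ 2 := by nlinarith
  have h1 : 4 * a ^ 2 ≤ 3 * (1 - 2 * a) ^ 2 := by nlinarith [sq_nonneg (2 * s - 1)]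
  have h2 : 2 * a ≤ r * (1 - 2 * a) := by nlinarith [sq_nonneg (r * (1 - 2*a) - 2*a)]
  have h3 : a ≤ (3 - r) / 4 := by nlinarith
  have hsq : ((3 - r)/4) ^ 2 = 3 / 4 - (3/8) * r := by linear_combination hr/16
  have hmain : a ^ 2 ≤ 3 / 4 - (3/8) * r := by
    calc a ^ 2 ≤ ((3 - r)/4) ^ 2 := by gcongr
    _ = _ := hsq
  refine ⟨hmain, ⟨fun he => ?_, fun ⟨ha', hs'⟩ => ?_⟩⟩
  · have h4 : ((3 - r)/4 - a) * ((3 - r)/4 + a) = 0 := by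
      linear_combination hr/16 - he
    have h5 : (0:ℝ) < (3 - r)/4 + a := by linarith
    have haeq : a = (3 - r) / 4 := by
      rcases mul_eq_zero.mp h4 with h | h
      · linarith
      · linarith
    have hs0 : (2 * s - 1) ^ 2 = 0 := by
      linear_combination 4*heq + hr/2 + (8*a + 2*(3 - r) - 12) * haeq
    have : 2 * s - 1 = 0 := pow_eq_zero_iff (by norm_num) |>.mp hs0
    exact ⟨haeq, by linarith⟩
  · linear_combination hr/16 + (a + (3 - r)/4) * ha'
end
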